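/- arXiv:math/0703250 — 2 statements merged into one kernel-verified Lean document; each statement's English description precedes it below -/
import Mathlib

section
/- Let S be a semigroup of homeomorphisms of a topological space X and let D be a control set for S, i.e., D ⊆ cl(Sx) for all x ∈ D, D is maximal with this property, and D has nonempty interior. If D₀ = {x ∈ D : x ∈ int(S⁻¹x)} is the set of transitivity, then for any x, y ∈ D₀ there exists s ∈ S with sx = y. -/
/-- For a control set `D` of a semigroup `S` of homeomorphisms of `X`, the action of `S`
is exactly transitive on the set of transitivity `D₀`. -/
theorem control_set_transitivity {X : Type*} [TopologicalSpace X]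
    (S : Set (Homeomorph X X))
    (hS : ∀ g ∈ S, ∀ h ∈ S, g.trans h ∈ S)
    (D : Set X)
    (h1 : ∀ x ∈ D, D ⊆ closure {y : X | ∃ g ∈ S, g x = y})
    (h2 : ∀ D' : Set X, D ⊆ D' →
      (∀ x ∈ D', D' ⊆ closure {y : X | ∃ g ∈ S, g x = y}) → D' = D)
    (h3 : (interior D).Nonempty)
    (D₀ : Set X)
    (hD₀ : D₀ = {x ∈ D | x ∈ interior {y : X | ∃ g ∈ S, g y = x}})
    (x y : X) (hx : x ∈ D₀) (hy : y ∈ D₀) :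
    ∃ s ∈ S, s x = y := by
  subst hD₀
  obtain ⟨hxD, -⟩ := hx
  obtain ⟨hyD, hyint⟩ := hy
  -- y ∈ closure of the orbit of x
  have hycl : y ∈ closure {z : X | ∃ g ∈ S, g x = z} := h1 x hxD hyD
  -- interior of S⁻¹y is an open neighborhood of y, so it meets the orbit of x
  have hmeets := mem_closure_iff.mp hycl (interior {z : X | ∃ g ∈ S, g z = y})
    isOpen_interior hyint
  obtain ⟨p, hp1, hp2⟩ := hmeets
  obtain ⟨g, hgS, hgx⟩ := hp2
  obtain ⟨h, hhS, hhp⟩ := interior_subset hp1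
  exact ⟨g.trans h, hS g hgS h hhS, by simp [hgx, hhp]⟩
end

section
/- Every nonempty open subsemigroup of a compact topological group is an open subgroup. -/
open Filter

private lemma key_negpow {G : Type*} [Group G] [TopologicalSpace G]
    [IsTopologicalGroup G] [CompactSpace G]
    (T : Set G) (hopen : IsOpen T) {a : G} (ha : a ∈ T) :
    ∃ n : ℕ, 1 ≤ n ∧ (a⁻¹) ^ n ∈ T := by
  have h : MapClusterPt a atTop ((a⁻¹) ^ · : ℕ → G) := by
    simpa using mapClusterPt_self_zpow_atTop_pow a⁻¹ (-1)
  have hT : T ∈ nhds a := hopen.mem_nhds ha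
  have := (mapClusterPt_iff_frequently.mp h) T hT
  rcases (frequently_atTop.mp this) 1 with ⟨n, hn1, hnT⟩
  exact ⟨n, hn1, hnT⟩

/-- Every nonempty open subsemigroup of a compact topological group is an open subgroup. -/
theorem open_subsemigroup_of_compact_group {G : Type*} [Group G] [TopologicalSpace G]
    [IsTopologicalGroup G] [CompactSpace G]
    (T : Set G) (hne : T.Nonempty) (hopen : IsOpen T)
    (hmul : ∀ a ∈ T, ∀ b ∈ T, a * b ∈ T) :
    (1 : G) ∈ T ∧ (∀ t ∈ T, t⁻¹ ∈ T) ∧ IsOpen T := by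
  have hpow : ∀ t ∈ T, ∀ n : ℕ, t ^ (n + 1) ∈ T := by
    intro t ht n
    induction n with
    | zero => simpa using ht
    | succ k ih => rw [pow_succ]; exact hmul _ ih _ ht
  have hinv : ∀ t ∈ T, t⁻¹ ∈ T := by
    intro t ht
    rcases key_negpow T hopen ht with ⟨n, hn1, hnT⟩
    rcases Nat.exists_eq_add_of_le hn1 with ⟨k, rfl⟩
    rcases Nat.eq_zero_or_pos k with rfl | hk
    · simpa using hnT
    · have h1 : t ^ k ∈ T := by
        rcases Nat.exists_eq_add_of_le hk with ⟨j, rfl⟩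
        simpa [Nat.add_comm] using hpow t ht j
      have := hmul _ h1 _ hnT
      have heq : t ^ k * (t⁻¹) ^ (1 + k) = t⁻¹ := by
        rw [inv_pow, pow_add]
        group
      rwa [heq] at this
  have h1 : (1 : G) ∈ T := by
    rcases hne with ⟨t, ht⟩
    have := hmul _ ht _ (hinv t ht)
    simpa using this
  exact ⟨h1, hinv, hopen⟩
end
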